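/- arXiv:0904.3371 — 2 statements merged into one kernel-verified Lean document; each statement's English description precedes it below -/
import Mathlib

section
/- Let P ≤ W be a finite subgroup. The ℚ-linear map ι : ℚ[P\W/P] → ℚ[W] into the group algebra of W, defined by ι(f) := Σ_{w∈W} (f(w)/#P)·w, is an injective homomorphism of ℚ-algebras from (ℚ[P\W/P], *_P, 1_P) to ℚ[W]; in particular ι(1_P) = (1/#P)·Σ_{g∈P} g and ι(f₁ *_P f₂) = ι(f₁)·ι(f₂) for all f₁, f₂ ∈ ℚ[P\W/P]. -/
/-- `f ∈ ℚ[H\W/K]`: `f : W → ℚ` is finitely supported, left `H`-invariant and right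
`K`-invariant. -/
def IsBiInvariant {W : Type*} [Group W] (H K : Subgroup W) (f : W → ℚ) : Prop :=
  (Function.support f).Finite ∧ ∀ h ∈ H, ∀ k ∈ K, ∀ w : W, f (h * w * k) = f w

/-- The convolution `(f₁ *_Q f₂)(w) = ∑_{v∈T} f₁(v)·f₂(v⁻¹·w)`, computed with the set of
representatives `T = {Quotient.out c : c ∈ W/Q}` of the left cosets `W/Q`. -/
noncomputable def dcConv {W : Type*} [Group W] (Q : Subgroup W) (f₁ f₂ : W → ℚ) : W → ℚ :=
  fun w => ∑ᶠ c : W ⧸ Q, f₁ (Quotient.out c) * f₂ ((Quotient.out c)⁻¹ * w)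

/-- `1_P`, the indicator function of the subgroup `P ⊆ W`. -/
noncomputable def subIndicator {W : Type*} [Group W] (P : Subgroup W) : W → ℚ :=
  Set.indicator (P : Set W) 1

/-- The map `ι : ℚ[P\W/P] → ℚ[W]`, `ι(f) = ∑_{w∈W} (f(w)/#P)·w`, into the group algebra. -/
noncomputable def iotaDC {W : Type*} [Group W] (P : Subgroup W) (f : W → ℚ) :
    MonoidAlgebra ℚ W :=
  ∑ᶠ w : W, MonoidAlgebra.single w (f w / (Nat.card P : ℚ))

/-!
The coefficient of `ι f` at `w` is `f w / #P`, so `ι` is linear and injective on finitely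
supported functions. For multiplicativity, the coefficient of `ι f₁ * ι f₂` at `x` is
`(#P)⁻² ∑_{a ∈ W} f₁ a f₂ (a⁻¹ x)`. Right `P`-invariance of `f₁` and left `P`-invariance of `f₂`
make the summand constant on each left coset `aP`, so the sum over `W` is `#P` times the sum
over coset representatives, which is `#P · (f₁ *_P f₂) x`.
-/

namespace QuotientGroup
variable {W : Type*} [Group W] (P : Subgroup W)

lemma bijective_out_mul : Function.Bijective fun x : (W ⧸ P) × P => x.1.out * x.2 := by
  constructor
  · rintro ⟨c, p⟩ ⟨c', p'⟩ h
    have hc : c = c' := by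
      rw [← out_eq' c, ← out_eq' c', ← mk_mul_of_mem c.out p.2, ← mk_mul_of_mem c'.out p'.2]
      exact congrArg _ h
    subst hc
    simpa using h
  · intro a
    obtain ⟨p, hp⟩ := mk_out_eq_mul P a
    exact ⟨(mk a, p⁻¹), by simp [hp]⟩

lemma finsum_eq_card_nsmul_finsum_out [Finite P] {M : Type*} [AddCommMonoid M] {g : W → M}
    (hg : (Function.support g).Finite) (hinv : ∀ a, ∀ p ∈ P, g (a * p) = g a) :
    ∑ᶠ a, g a = Nat.card P • ∑ᶠ c : W ⧸ P, g c.out := by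
  have : Fintype P := Fintype.ofFinite P
  have hsupp : (Function.support fun x : (W ⧸ P) × P => g (x.1.out * x.2)).Finite :=
    hg.preimage (bijective_out_mul P).injective.injOn
  have hsupp_out : (Function.support fun c : W ⧸ P => g c.out).Finite :=
    hg.preimage Quotient.out_injective.injOn
  rw [← finsum_comp _ (bijective_out_mul P), finsum_curry _ hsupp, smul_finsum' _ hsupp_out]
  refine finsum_congr fun c => ?_
  simp only [finsum_eq_sum_of_fintype, fun p : P => hinv c.out p p.2, Finset.sum_const,
    Finset.card_univ, Nat.card_eq_fintype_card]

end QuotientGroup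

namespace MonoidAlgebra

lemma coeff_mul_eq_finsum {R G : Type*} [Semiring R] [Group G] (x y : MonoidAlgebra R G) (g : G) :
    (x * y).coeff g = ∑ᶠ h, x.coeff h * y.coeff (h⁻¹ * g) := by
  rw [coeff_mul_apply_left, Finsupp.sum, finsum_eq_sum_of_support_subset]
  intro h hh
  rw [Finset.mem_coe, Finsupp.mem_support_iff]
  intro h0
  simp [h0] at hh

end MonoidAlgebra

namespace IsBiInvariant
variable {W : Type*} [Group W] {H K : Subgroup W} {f : W → ℚ}

lemma mono {H' K' : Subgroup W} (hf : IsBiInvariant H K f) (hH : H' ≤ H) (hK : K' ≤ K) :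
    IsBiInvariant H' K' f :=
  ⟨hf.1, fun h hh k hk => hf.2 h (hH hh) k (hK hk)⟩

lemma apply_mul_left (hf : IsBiInvariant H K f) {h : W} (hh : h ∈ H) (w : W) :
    f (h * w) = f w := by
  simpa using hf.2 h hh 1 K.one_mem w

lemma apply_mul_right (hf : IsBiInvariant H K f) {k : W} (hk : k ∈ K) (w : W) :
    f (w * k) = f w := by
  simpa using hf.2 1 H.one_mem k hk w

end IsBiInvariant

section iotaDC
variable {W : Type*} [Group W] (P : Subgroup W) {f g : W → ℚ}

lemma coeff_iotaDC (hf : (Function.support f).Finite) (x : W) :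
    (iotaDC P f).coeff x = f x / Nat.card P := by
  have hsupp : (Function.support fun w => MonoidAlgebra.single w (f w / Nat.card P)).Finite :=
    hf.subset fun w hw h0 => hw (by simp [h0])
  let coeffAt : MonoidAlgebra ℚ W →+ ℚ :=
    (Finsupp.applyAddHom x).comp MonoidAlgebra.coeffAddEquiv.toAddMonoidHom
  change coeffAt (iotaDC P f) = _
  rw [iotaDC, map_finsum coeffAt hsupp]
  simp only [coeffAt, AddMonoidHom.comp_apply, AddEquiv.toAddMonoidHom_eq_coe,
    AddMonoidHom.coe_coe, MonoidAlgebra.coeffAddEquiv_apply, MonoidAlgebra.coeff_single,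
    Finsupp.applyAddHom_apply]
  exact (finsum_eq_single _ x fun w hw => Finsupp.single_eq_of_ne hw.symm).trans
    Finsupp.single_eq_same

lemma iotaDC_subIndicator :
    iotaDC P (subIndicator P)
      = (Nat.card P : ℚ)⁻¹ • ∑ᶠ g ∈ (P : Set W), MonoidAlgebra.single g (1 : ℚ) := by
  rw [iotaDC, finsum_mem_def, smul_finsum]
  refine finsum_congr fun w => ?_
  by_cases hw : w ∈ P <;> simp [subIndicator, hw, div_eq_inv_mul]

lemma iotaDC_add (hf : (Function.support f).Finite) (hg : (Function.support g).Finite) :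
    iotaDC P (f + g) = iotaDC P f + iotaDC P g := by
  have hfg : (Function.support (f + g)).Finite := (hf.union hg).subset (Function.support_add f g)
  ext x
  rw [MonoidAlgebra.coeff_add, Finsupp.add_apply, coeff_iotaDC P hf, coeff_iotaDC P hg,
    coeff_iotaDC P hfg, Pi.add_apply, add_div]

lemma iotaDC_smul (a : ℚ) (hf : (Function.support f).Finite) :
    iotaDC P (a • f) = a • iotaDC P f := by
  ext x
  rw [MonoidAlgebra.coeff_smul_apply, coeff_iotaDC P hf,
    coeff_iotaDC P (hf.subset (Function.support_const_smul_subset a f)), Pi.smul_apply,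
    smul_eq_mul, smul_eq_mul, mul_div_assoc]

lemma iotaDC_inj [Finite P] (hf : (Function.support f).Finite) (hg : (Function.support g).Finite) :
    iotaDC P f = iotaDC P g ↔ f = g := by
  refine ⟨fun h => funext fun x => ?_, congrArg _⟩
  have hP : (Nat.card P : ℚ) ≠ 0 := Nat.cast_ne_zero.2 Nat.card_pos.ne'
  have hx := congrArg (fun y => y.coeff x) h
  simp only [coeff_iotaDC P hf, coeff_iotaDC P hg] at hx
  exact (div_left_inj' hP).1 hx

lemma dcConv_eq_card_mul_coeff_mul [Finite P] {f₁ f₂ : W → ℚ} (h₁ : IsBiInvariant ⊥ P f₁)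
    (h₂ : IsBiInvariant P ⊥ f₂) (x : W) :
    dcConv P f₁ f₂ x = Nat.card P * (iotaDC P f₁ * iotaDC P f₂).coeff x := by
  have hP : (Nat.card P : ℚ) ≠ 0 := Nat.cast_ne_zero.2 Nat.card_pos.ne'
  have hsum : ∑ᶠ a, f₁ a * f₂ (a⁻¹ * x) = Nat.card P * dcConv P f₁ f₂ x := by
    rw [QuotientGroup.finsum_eq_card_nsmul_finsum_out P, nsmul_eq_mul, dcConv]
    · exact h₁.1.subset fun a ha h0 => ha (by simp [h0])
    · intro a p hp
      rw [h₁.apply_mul_right hp, mul_inv_rev, mul_assoc, h₂.apply_mul_left (P.inv_mem hp)]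
  rw [MonoidAlgebra.coeff_mul_eq_finsum]
  simp only [coeff_iotaDC P h₁.1, coeff_iotaDC P h₂.1]
  have hterm : ∀ a, f₁ a / Nat.card P * (f₂ (a⁻¹ * x) / Nat.card P)
      = f₁ a * f₂ (a⁻¹ * x) * ((Nat.card P : ℚ) * Nat.card P)⁻¹ := fun a => by ring
  rw [finsum_congr hterm, ← finsum_mul, hsum]
  field_simp

lemma iotaDC_dcConv [Finite P] {f₁ f₂ : W → ℚ} (h₁ : IsBiInvariant ⊥ P f₁)
    (h₂ : IsBiInvariant P ⊥ f₂) :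
    iotaDC P (dcConv P f₁ f₂) = iotaDC P f₁ * iotaDC P f₂ := by
  have hP : (Nat.card P : ℚ) ≠ 0 := Nat.cast_ne_zero.2 Nat.card_pos.ne'
  have hconv : dcConv P f₁ f₂ = fun x => Nat.card P * (iotaDC P f₁ * iotaDC P f₂).coeff x :=
    funext (dcConv_eq_card_mul_coeff_mul P h₁ h₂)
  have hsupp : (Function.support (dcConv P f₁ f₂)).Finite := by
    rw [hconv]
    exact (iotaDC P f₁ * iotaDC P f₂).coeff.hasFiniteSupport.subset
      (Function.support_mul_subset_right _ _)
  ext x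
  rw [coeff_iotaDC P hsupp, hconv]
  field_simp

end iotaDC

/-- For a finite subgroup `P ≤ W`, the map `ι(f) = ∑_w (f(w)/#P)·w` is an injective
homomorphism of `ℚ`-algebras from `(ℚ[P\W/P], *_P, 1_P)` to the group algebra `ℚ[W]`;
in particular `ι(1_P) = (1/#P)·∑_{g∈P} g` and `ι(f₁ *_P f₂) = ι(f₁)·ι(f₂)`. -/
theorem iotaDC_algebra_embedding
    {W : Type*} [Group W] (P : Subgroup W) [Finite P] :
    iotaDC P (subIndicator P)
      = (Nat.card P : ℚ)⁻¹ • ∑ᶠ g ∈ (P : Set W), MonoidAlgebra.single g (1 : ℚ) ∧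
    (∀ (a : ℚ) (f g : W → ℚ), IsBiInvariant P P f → IsBiInvariant P P g →
      iotaDC P (a • f + g) = a • iotaDC P f + iotaDC P g) ∧
    (∀ f₁ f₂ : W → ℚ, IsBiInvariant P P f₁ → IsBiInvariant P P f₂ →
      iotaDC P (dcConv P f₁ f₂) = iotaDC P f₁ * iotaDC P f₂) ∧
    (∀ f g : W → ℚ, IsBiInvariant P P f → IsBiInvariant P P g →
      iotaDC P f = iotaDC P g → f = g) := by
  refine ⟨iotaDC_subIndicator P, fun a f g hf hg => ?_, fun f₁ f₂ h₁ h₂ => ?_,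
    fun f g hf hg => (iotaDC_inj P hf.1 hg.1).1⟩
  · rw [iotaDC_add P (hf.1.subset (Function.support_const_smul_subset a f)) hg.1,
      iotaDC_smul P a hf.1]
  · exact iotaDC_dcConv P (h₁.mono bot_le le_rfl) (h₂.mono le_rfl bot_le)
end

section
/- Let X be a torsion-free abelian group and W a finite group acting faithfully on X by automorphisms, and let W̃ := X ⋊ W. Then the center of the group algebra ℚ[W̃] is exactly ℚ[X]^W, i.e., an element of ℚ[W̃] is central if and only if it is supported on the subgroup X ⊆ W̃ and its coefficient function on X is W-invariant. -/
/-! An element of a group algebra is central iff its coefficient function is invariant under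
conjugation. Conjugating `inl x` by `g` gives `inl (φ g.right x)`, which yields the invariance
condition. If `g` has `g.right ≠ 1`, faithfulness gives `x` with `φ g.right x ≠ x`, and conjugating
`g` by the powers of `inl x` produces `inl (uᵏ) * g` with `u = x * (φ g.right x)⁻¹ ≠ 1`; these are
pairwise distinct by torsion-freeness, so `g` has an infinite conjugacy class and cannot lie in the
finite support of a central element. -/

namespace MonoidAlgebra

variable {k G : Type*} [CommSemiring k] [Group G]

theorem forall_mul_comm_iff_coeff_conj_eq {z : MonoidAlgebra k G} :
    (∀ y, z * y = y * z) ↔ ∀ g h : G, z.coeff (g * h * g⁻¹) = z.coeff h := by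
  constructor
  · intro hz g h
    simpa [mul_assoc] using congr($(hz (single g 1)).coeff (g * h))
  · intro hz y
    induction y using MonoidAlgebra.induction with
    | zero => simp
    | single_add a b f _ _ ih =>
      suffices z * single a b = single a b * z by rw [mul_add, add_mul, ih, this]
      ext y
      rw [coeff_mul_single_apply, coeff_single_mul_apply, mul_comm, ← hz a⁻¹, inv_inv]
      group

theorem finite_range_conj_of_coeff_ne_zero {z : MonoidAlgebra k G}
    (hz : ∀ g h : G, z.coeff (g * h * g⁻¹) = z.coeff h) {h : G} (hh : z.coeff h ≠ 0) :
    (Set.range fun g : G ↦ g * h * g⁻¹).Finite :=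
  z.coeff.support.finite_toSet.subset <| Set.range_subset_iff.mpr fun g ↦ by simpa [hz] using hh

end MonoidAlgebra

namespace SemidirectProduct

variable {N G : Type*} [CommGroup N] [Group G] {φ : G →* MulAut N}

theorem mul_inl_mul_inv (g : N ⋊[φ] G) (n : N) :
    g * inl n * g⁻¹ = inl (φ g.right n) := by
  ext <;> simp [mul_comm]

theorem inl_mul_mul_inv_inl (n : N) (g : N ⋊[φ] G) :
    inl n * g * (inl n)⁻¹ = inl (n * (φ g.right n)⁻¹) * g := by
  ext <;> simp [mul_comm, mul_assoc]

theorem infinite_range_conj [IsMulTorsionFree N] {g : N ⋊[φ] G} {n : N}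
    (hn : φ g.right n ≠ n) : (Set.range fun a : N ⋊[φ] G ↦ a * g * a⁻¹).Infinite := by
  have hu : n * (φ g.right n)⁻¹ ≠ 1 := mul_inv_eq_one.not.mpr (Ne.symm hn)
  have hinj : Function.Injective fun k : ℕ ↦ inl (n ^ k) * g * (inl (n ^ k))⁻¹ := by
    intro k m hkm
    dsimp only at hkm
    rw [inl_mul_mul_inv_inl, inl_mul_mul_inv_inl, mul_left_inj, inl_inj, map_pow, map_pow,
      ← inv_pow, ← inv_pow, ← mul_pow, ← mul_pow] at hkm
    exact IsMulTorsionFree.pow_right_injective hu hkm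
  exact (Set.infinite_range_of_injective hinj).mono (Set.range_comp_subset_range _ _)

theorem conj_invariant_of_support_subset_range_inl {α : Type*} [Zero α] {f : N ⋊[φ] G → α}
    (hsupp : ∀ g, f g ≠ 0 → g.right = 1) (hinv : ∀ w n, f (inl (φ w n)) = f (inl n))
    (g h : N ⋊[φ] G) : f (g * h * g⁻¹) = f h := by
  by_cases hh : h.right = 1
  · obtain ⟨n, rfl⟩ : ∃ n, h = inl n := ⟨h.left, by ext <;> simp [hh]⟩
    rw [mul_inl_mul_inv, hinv]
  · have hconj : (g * h * g⁻¹).right ≠ 1 := by simpa [conj_eq_one_iff] using hh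
    rw [of_not_not ((hsupp _).mt hconj), of_not_not ((hsupp _).mt hh)]

end SemidirectProduct

open SemidirectProduct in
theorem center_of_extended_affine_group_algebra_general
    {X : Type*} [AddCommGroup X] {W : Type*} [Group W]
    (φ : W →* MulAut (Multiplicative X))
    (htorsionfree : ∀ (x : X) (n : ℕ), n ≠ 0 → n • x = 0 → x = 0)
    (hfaithful : ∀ w : W, (∀ x : Multiplicative X, φ w x = x) → w = 1)
    (z : MonoidAlgebra ℚ (Multiplicative X ⋊[φ] W)) :
    (∀ y : MonoidAlgebra ℚ (Multiplicative X ⋊[φ] W), z * y = y * z) ↔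
      ((∀ wt : Multiplicative X ⋊[φ] W, z.coeff wt ≠ 0 → wt.right = 1) ∧
       (∀ (w : W) (x : Multiplicative X),
         z.coeff (SemidirectProduct.inl (φ w x)) = z.coeff (SemidirectProduct.inl x))) := by
  have : IsAddTorsionFree X := .of_not_isOfFinAddOrder fun x hx hfin ↦ by
    obtain ⟨n, hn, hnx⟩ := isOfFinAddOrder_iff_nsmul_eq_zero.mp hfin
    exact hx (htorsionfree x n hn.ne' hnx)
  rw [MonoidAlgebra.forall_mul_comm_iff_coeff_conj_eq]
  refine ⟨fun hz ↦ ⟨fun g hg ↦ ?_, fun w x ↦ ?_⟩, fun ⟨hsupp, hinv⟩ ↦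
    conj_invariant_of_support_subset_range_inl hsupp hinv⟩
  · by_contra hw
    obtain ⟨x, hx⟩ : ∃ x, φ g.right x ≠ x := by
      by_contra! h
      exact hw (hfaithful _ h)
    exact infinite_range_conj hx (MonoidAlgebra.finite_range_conj_of_coeff_ne_zero hz hg)
  · simpa [mul_inl_mul_inv] using hz (inr w) (inl x)

/-- Let `X` be a torsion-free abelian group and `W` a finite group acting faithfully on `X`
by automorphisms (the action given by `φ : W →* MulAut (Multiplicative X)`), and let
`W̃ := X ⋊ W`.  Then the center of the group algebra `ℚ[W̃]` is exactly `ℚ[X]^W`: an element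
of `ℚ[W̃]` is central if and only if it is supported on the subgroup `X ⊆ W̃` and its
coefficient function on `X` is `W`-invariant. -/
theorem center_of_extended_affine_group_algebra
    {X : Type*} [AddCommGroup X] {W : Type*} [Group W] [Finite W]
    (φ : W →* MulAut (Multiplicative X))
    (htorsionfree : ∀ (x : X) (n : ℕ), n ≠ 0 → n • x = 0 → x = 0)
    (hfaithful : ∀ w : W, (∀ x : Multiplicative X, φ w x = x) → w = 1)
    (z : MonoidAlgebra ℚ (Multiplicative X ⋊[φ] W)) :
    (∀ y : MonoidAlgebra ℚ (Multiplicative X ⋊[φ] W), z * y = y * z) ↔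
      ((∀ wt : Multiplicative X ⋊[φ] W, z.coeff wt ≠ 0 → wt.right = 1) ∧
       (∀ (w : W) (x : Multiplicative X),
         z.coeff (SemidirectProduct.inl (φ w x)) = z.coeff (SemidirectProduct.inl x))) :=
  center_of_extended_affine_group_algebra_general φ htorsionfree hfaithful z
end
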